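/- arXiv:2311.07795 — 3 statements merged into one kernel-verified Lean document; each statement's English description precedes it below -/
import Mathlib

section
/- Let Γ be a finite set, p a probability measure on Γ, L a transition rate on Γ, and q : Γ × Γ → ℝ≥0 a flux. Then the supremum over bounded ξ : Γ × Γ → ℝ of ∑_{x,y} ξ(x,y) q(x,y) − ∑_{x,y} (e^{ξ(x,y)} − 1) p(x) L(x,y) equals ∑_{x,y} ent(q(x,y)/(p(x)L(x,y))) · p(x)L(x,y) if q(x,y) = 0 whenever p(x)L(x,y) = 0, and equals +∞ otherwise; where ent(s) = s log s − s + 1. -/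
/-!
The objective `∑ ξ q − ∑ (e^ξ − 1) p⊗L` is a sum of independent one-variable functions
`t ↦ t q − (eᵗ − 1) m`, so its supremum is the sum of their suprema.  For `q, m > 0` the
maximum `ent (q / m) · m` is attained at `t = log (q / m)` (Fenchel–Young for `exp` and
`s ↦ s log s − s`); for `q = 0` the supremum `m` is approached as `t → −∞`; for `m = 0 < q`
the function is unbounded.
-/

open Real Finset

/-- The entropy function `ent s = s·log s − s + 1`; with Lean's conventions
`Real.log 0 = 0` and `0 / 0 = 0` the expressions below implement the
conventions `0·log 0 = 0` and `ent(0/0)·0 = 0`. -/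
noncomputable def ent (s : ℝ) : ℝ := s * Real.log s - s + 1

open Set Filter Topology

lemma EReal.iSup_coe_eq_of_isLUB {β : Type*} {g : β → ℝ} {a : ℝ} (h : IsLUB (range g) a) :
    ⨆ b, (g b : EReal) = a := by
  have : Nonempty β := range_nonempty_iff_nonempty.mp h.nonempty
  rw [← h.ciSup_eq, Monotone.map_ciSup_of_continuousAt continuous_coe_real_ereal.continuousAt
    EReal.coe_strictMono.monotone h.bddAbove]

lemma isLUB_range_sum_apply {ι α : Type*} [Fintype ι] {f : ι → α → ℝ} {s : ι → ℝ}
    (h : ∀ i, IsLUB (range (f i)) (s i)) :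
    IsLUB (range fun ξ : ι → α => ∑ i, f i (ξ i)) (∑ i, s i) := by
  refine ⟨?_, fun b hb => ?_⟩
  · rintro _ ⟨ξ, rfl⟩
    exact sum_le_sum fun i _ => (h i).1 (mem_range_self _)
  · have approx : ∀ i, ∃ t : ℕ → α, Tendsto (fun n => f i (t n)) atTop (𝓝 (s i)) := by
      intro i
      obtain ⟨u, -, -, hu, hmem⟩ := (h i).exists_seq_monotone_tendsto (h i).nonempty
      choose t ht using hmem
      exact ⟨t, by simpa only [ht] using hu⟩
    choose t ht using approx
    exact le_of_tendsto' (tendsto_finsetSum _ fun i _ => ht i) fun n => hb ⟨fun i => t i n, rfl⟩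

lemma ent_div_mul_of_ne_zero (q : ℝ) {m : ℝ} (hm : m ≠ 0) :
    ent (q / m) * m = q * log (q / m) - q + m := by
  unfold ent
  field_simp

lemma mul_sub_exp_sub_one_mul_le_ent {q m : ℝ} (hq : 0 < q) (hm : 0 < m) (t : ℝ) :
    t * q - (exp t - 1) * m ≤ ent (q / m) * m := by
  have young := mul_le_mul_of_nonneg_right (add_one_le_exp (t - log (q / m))) hq.le
  have hexp : exp (t - log (q / m)) * q = exp t * m := by
    rw [exp_sub, exp_log (div_pos hq hm)]
    field_simp
  rw [ent_div_mul_of_ne_zero q hm.ne']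
  linarith

lemma isLUB_range_mul_sub_exp_sub_one_mul {q m : ℝ} (hq : 0 ≤ q) (hm : 0 ≤ m)
    (hqm : m = 0 → q = 0) :
    IsLUB (range fun t => t * q - (exp t - 1) * m) (ent (q / m) * m) := by
  rcases hq.eq_or_lt with rfl | hq
  · have hent : ent (0 / m) * m = m := by simp [ent]
    rw [hent]
    refine isLUB_of_tendsto_atBot (fun a b hab => ?_) ?_
    · nlinarith [exp_le_exp.2 hab]
    · simpa using ((tendsto_exp_atBot.sub_const 1).mul_const m).neg
  · have hm : 0 < m := hm.lt_of_ne fun h => hq.ne' (hqm h.symm)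
    refine IsGreatest.isLUB ⟨⟨log (q / m), ?_⟩, ?_⟩
    · dsimp only
      rw [exp_log (div_pos hq hm), ent_div_mul_of_ne_zero q hm.ne']
      field_simp
      ring
    · rintro _ ⟨t, rfl⟩
      exact mul_sub_exp_sub_one_mul_le_ent hq hm t

section DualObjective

variable {ι : Type*} [Fintype ι] {q m : ι → ℝ}

noncomputable def dualObjective (q m : ι → ℝ) (ξ : ι → ℝ) : ℝ :=
  ∑ i, (ξ i * q i - (exp (ξ i) - 1) * m i)

lemma iSup_dualObjective_eq_sum_ent (hq : ∀ i, 0 ≤ q i) (hm : ∀ i, 0 ≤ m i)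
    (hqm : ∀ i, m i = 0 → q i = 0) :
    ⨆ ξ, (dualObjective q m ξ : EReal) = ((∑ i, ent (q i / m i) * m i : ℝ) : EReal) :=
  EReal.iSup_coe_eq_of_isLUB <| isLUB_range_sum_apply fun i =>
    isLUB_range_mul_sub_exp_sub_one_mul (hq i) (hm i) (hqm i)

lemma iSup_dualObjective_eq_top {i : ι} (hmi : m i = 0) (hqi : q i ≠ 0) :
    ⨆ ξ, (dualObjective q m ξ : EReal) = ⊤ := by
  classical
  have hval : ∀ r : ℝ, dualObjective q m (Pi.single i (r / q i)) = r := by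
    intro r
    rw [dualObjective, Fintype.sum_eq_single i fun j hj => by simp [hj]]
    simp [hmi, hqi]
  refine EReal.eq_top_iff_forall_lt _ |>.2 fun r => ?_
  calc (r : EReal) < (r + 1 : ℝ) := EReal.coe_lt_coe_iff.2 (lt_add_one r)
    _ = dualObjective q m (Pi.single i ((r + 1) / q i)) := by rw [hval]
    _ ≤ ⨆ ξ, (dualObjective q m ξ : EReal) := le_iSup (fun ξ => (dualObjective q m ξ : EReal)) _

end DualObjective

theorem lagrangian_duality_general {Γ : Type*} [Fintype Γ]
    (p : Γ → ℝ) (hp0 : ∀ x, 0 ≤ p x)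
    (L : Γ → Γ → ℝ) (hL : ∀ x y, 0 ≤ L x y)
    (q : Γ → Γ → ℝ) (hq : ∀ x y, 0 ≤ q x y) :
    ((∀ x y, p x * L x y = 0 → q x y = 0) →
      (⨆ ξ : Γ × Γ → ℝ,
        ((∑ x, ∑ y, ξ (x, y) * q x y
          - ∑ x, ∑ y, (Real.exp (ξ (x, y)) - 1) * (p x * L x y) : ℝ) : EReal))
        = ((∑ x, ∑ y, ent (q x y / (p x * L x y)) * (p x * L x y) : ℝ) : EReal)) ∧
    ((¬ ∀ x y, p x * L x y = 0 → q x y = 0) →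
      (⨆ ξ : Γ × Γ → ℝ,
        ((∑ x, ∑ y, ξ (x, y) * q x y
          - ∑ x, ∑ y, (Real.exp (ξ (x, y)) - 1) * (p x * L x y) : ℝ) : EReal)) = ⊤) := by
  have hobj (ξ : Γ × Γ → ℝ) : ∑ x, ∑ y, ξ (x, y) * q x y
      - ∑ x, ∑ y, (exp (ξ (x, y)) - 1) * (p x * L x y)
      = dualObjective (fun z : Γ × Γ => q z.1 z.2) (fun z : Γ × Γ => p z.1 * L z.1 z.2) ξ := by
    simp only [dualObjective, sum_sub_distrib, Fintype.sum_prod_type]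
  simp only [hobj]
  refine ⟨fun hqm => ?_, fun hnqm => ?_⟩
  · rw [iSup_dualObjective_eq_sum_ent (fun z : Γ × Γ => hq z.1 z.2)
      (fun z : Γ × Γ => mul_nonneg (hp0 z.1) (hL z.1 z.2)) (fun z : Γ × Γ => hqm z.1 z.2),
      Fintype.sum_prod_type]
  · push Not at hnqm
    obtain ⟨x, y, hm0, hq0⟩ := hnqm
    exact iSup_dualObjective_eq_top (i := (x, y)) hm0 hq0

/-- Dual (Legendre) representation of the Lagrangian: for a probability vector
`p` on a finite set `Γ`, a transition rate `L` and a flux `q`, the supremum over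
`ξ : Γ × Γ → ℝ` of `∑ ξ q − ∑ (e^ξ − 1) p⊗L` equals the relative entropy
`∑ ent(q/(p⊗L)) p⊗L` if `q ≪ p⊗L`, and `+∞` otherwise. -/
theorem lagrangian_duality {Γ : Type*} [Fintype Γ]
    (p : Γ → ℝ) (hp0 : ∀ x, 0 ≤ p x) (hp1 : ∑ x, p x = 1)
    (L : Γ → Γ → ℝ) (hL : ∀ x y, 0 ≤ L x y)
    (q : Γ → Γ → ℝ) (hq : ∀ x y, 0 ≤ q x y) :
    ((∀ x y, p x * L x y = 0 → q x y = 0) →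
      (⨆ ξ : Γ × Γ → ℝ,
        ((∑ x, ∑ y, ξ (x, y) * q x y
          - ∑ x, ∑ y, (Real.exp (ξ (x, y)) - 1) * (p x * L x y) : ℝ) : EReal))
        = ((∑ x, ∑ y, ent (q x y / (p x * L x y)) * (p x * L x y) : ℝ) : EReal)) ∧
    ((¬ ∀ x y, p x * L x y = 0 → q x y = 0) →
      (⨆ ξ : Γ × Γ → ℝ,
        ((∑ x, ∑ y, ξ (x, y) * q x y
          - ∑ x, ∑ y, (Real.exp (ξ (x, y)) - 1) * (p x * L x y) : ℝ) : EReal)) = ⊤) :=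
  lagrangian_duality_general p hp0 L hL q hq
end

section
/- Gibbs variational principle for measures on a finite set: for a probability measure R on a finite set Γ and f : Γ → [0,+∞] with R({f < ∞}) > 0, inf over probability measures ν on Γ of (∑_x f(x) ν(x) + Ent(ν | R)) equals −log ∑_x e^{−f(x)} R(x), with the unique minimizer ν*(x) = e^{−f(x)} R(x) / ∑_y e^{−f(y)} R(y), where e^{−∞} := 0. -/
open Real Finset Classical

open scoped ENNReal

/-- additive hom coercion ℝ →+ EReal, to push coercions through sums -/
noncomputable def realToEReal : ℝ →+ EReal := ⟨⟨(↑·), EReal.coe_zero⟩, EReal.coe_add⟩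

lemma ereal_coe_sum {Γ : Type*} (s : Finset Γ) (g : Γ → ℝ) :
    ((∑ x ∈ s, g x : ℝ) : EReal) = ∑ x ∈ s, (g x : EReal) :=
  map_sum realToEReal g s

lemma ennreal_coe_toReal_ereal (x : ℝ≥0∞) (h : x ≠ ⊤) :
    ((x.toReal : ℝ) : EReal) = (x : EReal) := by
  rw [← EReal.toReal_coe_ennreal]
  exact EReal.coe_toReal (by simpa using h) (EReal.coe_ennreal_ne_bot x)

/-- pointwise Gibbs inequality -/
lemma gibbs_pt (a b : ℝ) (ha : 0 ≤ a) (hb : 0 ≤ b) (hab : b = 0 → a = 0) :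
    0 ≤ a * Real.log (a / b) - a + b ∧ (a * Real.log (a / b) - a + b = 0 → a = b) := by
  rcases eq_or_lt_of_le ha with he | hp
  · refine ⟨by simp [← he, hb], fun h0 => by simp [← he] at h0 ⊢; linarith⟩
  · have hbp : 0 < b := hb.lt_of_ne fun h => absurd (hab h.symm) hp.ne'
    have hld : Real.log (b / a) = - Real.log (a / b) := by
      rw [Real.log_div hbp.ne' hp.ne', Real.log_div hp.ne' hbp.ne']; ring
    have h2 : a * (b / a - 1) = b - a := by field_simp
    constructor
    · have hlog : Real.log (b / a) ≤ b / a - 1 := Real.log_le_sub_one_of_pos (by positivity)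
      have := mul_le_mul_of_nonneg_left hlog hp.le
      rw [hld] at this
      nlinarith
    · intro h0
      by_contra hne
      have h1 : b / a ≠ 1 := by
        intro h1
        apply hne
        field_simp at h1
        linarith
      have hlog : Real.log (b / a) < b / a - 1 := Real.log_lt_sub_one_of_pos (by positivity) h1
      have := mul_lt_mul_of_pos_left hlog hp
      rw [hld] at this
      nlinarith

/-- finite Gibbs inequality with equality case -/
lemma gibbs_sum {Γ : Type*} [Fintype Γ] (ν μ : Γ → ℝ)
    (hν : ∀ x, 0 ≤ ν x) (hμ : ∀ x, 0 ≤ μ x)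
    (hsν : ∑ x, ν x = 1) (hsμ : ∑ x, μ x = 1)
    (hac : ∀ x, μ x = 0 → ν x = 0) :
    0 ≤ ∑ x, ν x * Real.log (ν x / μ x) ∧
      (∑ x, ν x * Real.log (ν x / μ x) = 0 → ν = μ) := by
  have hsum : ∑ x, (ν x * Real.log (ν x / μ x) - ν x + μ x)
      = ∑ x, ν x * Real.log (ν x / μ x) := by
    rw [Finset.sum_add_distrib, Finset.sum_sub_distrib, hsν, hsμ]
    ring
  have hnn : ∀ x ∈ Finset.univ, 0 ≤ ν x * Real.log (ν x / μ x) - ν x + μ x :=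
    fun x _ => (gibbs_pt (ν x) (μ x) (hν x) (hμ x) (hac x)).1
  constructor
  · rw [← hsum]; exact Finset.sum_nonneg hnn
  · intro h0
    have hz := (Finset.sum_eq_zero_iff_of_nonneg hnn).mp (by rw [hsum, h0])
    funext x
    exact (gibbs_pt (ν x) (μ x) (hν x) (hμ x) (hac x)).2 (hz x (Finset.mem_univ x))

/-- Gibbs variational principle on a finite set: for a probability vector `R`
on a finite set `Γ` and `f : Γ → [0,+∞]` finite on a set of positive
`R`-measure, the infimum over probability vectors `ν` of
`∑_x f(x) ν(x) + Ent(ν|R)` equals `−log ∑_x e^{−f(x)} R(x)` (with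
`e^{−∞} := 0`), uniquely attained at `ν*(x) = e^{−f(x)} R(x) / Z`. -/
theorem gibbs_variational_finite {Γ : Type*} [Fintype Γ]
    (R : Γ → ℝ) (hR0 : ∀ x, 0 ≤ R x) (hR1 : ∑ x, R x = 1)
    (f : Γ → ℝ≥0∞) (hfin : ∃ x, f x ≠ ⊤ ∧ 0 < R x) :
    let w : Γ → ℝ := fun x => if f x = ⊤ then 0 else Real.exp (-(f x).toReal)
    let Z : ℝ := ∑ x, w x * R x
    let νstar : Γ → ℝ := fun x => w x * R x / Z
    let cost : (Γ → ℝ) → EReal := fun ν =>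
      (∑ x, (f x : EReal) * ((ν x : ℝ) : EReal)) +
        (if ∀ x, R x = 0 → ν x = 0
         then ((∑ x, ν x * Real.log (ν x / R x) : ℝ) : EReal) else (⊤ : EReal))
    (∀ ν : Γ → ℝ, (∀ x, 0 ≤ ν x) → ∑ x, ν x = 1 →
      ((-Real.log Z : ℝ) : EReal) ≤ cost ν) ∧
    (∀ x, 0 ≤ νstar x) ∧ (∑ x, νstar x = 1) ∧
    cost νstar = ((-Real.log Z : ℝ) : EReal) ∧
    (∀ ν : Γ → ℝ, (∀ x, 0 ≤ ν x) → ∑ x, ν x = 1 →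
      cost ν = ((-Real.log Z : ℝ) : EReal) → ν = νstar) := by
  intro w Z νstar cost
  have hw0 : ∀ x, 0 ≤ w x := by
    intro x; simp only [w]; split
    · exact le_refl 0
    · exact (Real.exp_pos _).le
  obtain ⟨x0, hx0f, hx0R⟩ := hfin
  have hZpos : 0 < Z := by
    apply Finset.sum_pos' (fun x _ => mul_nonneg (hw0 x) (hR0 x))
    refine ⟨x0, Finset.mem_univ x0, ?_⟩
    have hwx : w x0 = Real.exp (-(f x0).toReal) := if_neg hx0f
    rw [hwx]
    positivity
  have hνs_nn : ∀ x, 0 ≤ νstar x := fun x =>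
    div_nonneg (mul_nonneg (hw0 x) (hR0 x)) hZpos.le
  have hνs_sum : ∑ x, νstar x = 1 := by
    simp only [νstar]
    rw [← Finset.sum_div]
    exact div_self hZpos.ne'
  -- key identity: on the absolutely continuous finite-energy cone, the cost
  -- equals relative entropy w.r.t. νstar minus log Z
  have key : ∀ ν : Γ → ℝ, (∀ x, 0 ≤ ν x) → ∑ x, ν x = 1 →
      (∀ x, R x = 0 → ν x = 0) → (∀ x, f x = ⊤ → ν x = 0) →
      cost ν = ((∑ x, ν x * Real.log (ν x / νstar x) - Real.log Z : ℝ) : EReal) := by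
    intro ν hν hνs hac htop
    have hA : (∑ x, (f x : EReal) * ((ν x : ℝ) : EReal))
        = ((∑ x, (f x).toReal * ν x : ℝ) : EReal) := by
      rw [ereal_coe_sum]
      apply Finset.sum_congr rfl
      intro x _
      rcases eq_or_ne (ν x) 0 with h0 | h0
      · simp [h0]
      · have hfx : f x ≠ ⊤ := fun ht => h0 (htop x ht)
        rw [EReal.coe_mul, ennreal_coe_toReal_ereal (f x) hfx]
    simp only [cost]
    rw [hA, if_pos hac, ← EReal.coe_add, EReal.coe_eq_coe_iff, ← Finset.sum_add_distrib]
    have hr : ∑ x, ν x * Real.log (ν x / νstar x) - Real.log Z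
        = ∑ x, (ν x * Real.log (ν x / νstar x) - ν x * Real.log Z) := by
      rw [Finset.sum_sub_distrib, ← Finset.sum_mul, hνs, one_mul]
    rw [hr]
    apply Finset.sum_congr rfl
    intro x _
    rcases eq_or_lt_of_le (hν x) with h0 | hp
    · simp [← h0]
    · have hRx : 0 < R x := (hR0 x).lt_of_ne fun h => absurd (hac x h.symm) hp.ne'
      have hfx : f x ≠ ⊤ := fun ht => absurd (htop x ht) hp.ne'
      have hwx : w x = Real.exp (-(f x).toReal) := if_neg hfx
      have hwp : 0 < w x := hwx ▸ Real.exp_pos _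
      have hνsp : 0 < νstar x := div_pos (mul_pos hwp hRx) hZpos
      have e1 : Real.log (νstar x) = -(f x).toReal + Real.log (R x) - Real.log Z := by
        show Real.log (w x * R x / Z) = _
        rw [Real.log_div (mul_pos hwp hRx).ne' hZpos.ne',
          Real.log_mul hwp.ne' hRx.ne', hwx, Real.log_exp]
      rw [Real.log_div hp.ne' hνsp.ne', Real.log_div hp.ne' hRx.ne', e1]
      ring
  -- absolute continuity w.r.t. νstar
  have haux : ∀ ν : Γ → ℝ, (∀ x, R x = 0 → ν x = 0) → (∀ x, f x = ⊤ → ν x = 0) →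
      ∀ x, νstar x = 0 → ν x = 0 := by
    intro ν hac htop x hx
    have hwr : w x * R x = 0 := by
      have h := hx
      simp only [νstar, div_eq_zero_iff] at h
      rcases h with h | h
      · exact h
      · exact absurd h hZpos.ne'
    rcases mul_eq_zero.mp hwr with h | h
    · by_cases hfx : f x = ⊤
      · exact htop x hfx
      · exact absurd h (by rw [show w x = _ from if_neg hfx]; exact (Real.exp_pos _).ne')
    · exact hac x h
  -- a cost is ⊤ outside the good cone
  have hcost_top : ∀ ν : Γ → ℝ, (∀ x, 0 ≤ ν x) →
      (¬ (∀ x, R x = 0 → ν x = 0) ∨ ¬ (∀ x, f x = ⊤ → ν x = 0)) → cost ν = ⊤ := by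
    intro ν hν hcase
    rcases hcase with hac | htop
    · have hAnn : (0 : EReal) ≤ ∑ x, (f x : EReal) * ((ν x : ℝ) : EReal) :=
        Finset.sum_nonneg fun x _ =>
          mul_nonneg (EReal.coe_ennreal_nonneg _) (by exact_mod_cast hν x)
      have hAne : (∑ x, (f x : EReal) * ((ν x : ℝ) : EReal)) ≠ ⊥ := by
        intro hb; rw [hb] at hAnn; simp at hAnn
      simp only [cost]
      rw [if_neg hac]
      exact EReal.add_top_of_ne_bot hAne
    · push_neg at htop
      obtain ⟨x1, hx1f, hx1ν⟩ := htop
      have hterm : (f x1 : EReal) * ((ν x1 : ℝ) : EReal) = ⊤ := by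
        rw [hx1f]
        simp only [EReal.coe_ennreal_top]
        exact EReal.top_mul_coe_of_pos ((hν x1).lt_of_ne (Ne.symm hx1ν))
      have hA : (∑ x, (f x : EReal) * ((ν x : ℝ) : EReal)) = ⊤ := by
        apply top_le_iff.mp
        rw [← hterm]
        exact Finset.single_le_sum (f := fun x => (f x : EReal) * ((ν x : ℝ) : EReal))
          (fun x _ => mul_nonneg (EReal.coe_ennreal_nonneg _) (EReal.coe_nonneg.mpr (hν x)))
          (Finset.mem_univ x1)
      simp only [cost]
      rw [hA]
      split
      · exact EReal.top_add_coe _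
      · rfl
  refine ⟨?_, hνs_nn, hνs_sum, ?_, ?_⟩
  · -- lower bound
    intro ν hν hνs
    by_cases hac : ∀ x, R x = 0 → ν x = 0
    · by_cases htop : ∀ x, f x = ⊤ → ν x = 0
      · rw [key ν hν hνs hac htop, EReal.coe_le_coe_iff]
        have := (gibbs_sum ν νstar hν hνs_nn hνs hνs_sum (haux ν hac htop)).1
        linarith
      · rw [hcost_top ν hν (Or.inr htop)]; exact le_top
    · rw [hcost_top ν hν (Or.inl hac)]; exact le_top
  · -- value at νstar
    have hacs : ∀ x, R x = 0 → νstar x = 0 := by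
      intro x h; simp only [νstar, h, mul_zero, zero_div]
    have htops : ∀ x, f x = ⊤ → νstar x = 0 := by
      intro x h; simp only [νstar, w, if_pos h, zero_mul, zero_div]
    rw [key νstar hνs_nn hνs_sum hacs htops, EReal.coe_eq_coe_iff]
    have hz : ∑ x, νstar x * Real.log (νstar x / νstar x) = 0 := by
      apply Finset.sum_eq_zero
      intro x _
      rcases eq_or_ne (νstar x) 0 with h | h
      · simp [h]
      · rw [div_self h, Real.log_one, mul_zero]
    rw [hz]; ring
  · -- uniqueness
    intro ν hν hνs hcost
    have hac : ∀ x, R x = 0 → ν x = 0 := by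
      by_contra hac
      rw [hcost_top ν hν (Or.inl hac)] at hcost
      exact (EReal.coe_ne_top _) hcost.symm
    have htop : ∀ x, f x = ⊤ → ν x = 0 := by
      by_contra htop
      rw [hcost_top ν hν (Or.inr htop)] at hcost
      exact (EReal.coe_ne_top _) hcost.symm
    rw [key ν hν hνs hac htop, EReal.coe_eq_coe_iff] at hcost
    have hz : ∑ x, ν x * Real.log (ν x / νstar x) = 0 := by linarith
    exact (gibbs_sum ν νstar hν hνs_nn hνs hνs_sum (haux ν hac htop)).2 hz
end

section
/- Verification argument for the finite-horizon optimal control: let Γ be finite, L a transition rate, and ψ : [0,T] × Γ → ℝ a C¹-in-time solution of ∂_t ψ_t(x) + ∑_y (e^{ψ_t(y)−ψ_t(x)} − 1) L(x,y) = 0 with ψ_T = −f for a bounded f ≥ 0. Then for every pair (p, q) with p : [0,T] → probability vectors on Γ absolutely continuous in t, q_t : Γ × Γ → ℝ≥0, satisfying the continuity equation d/dt p_t(x) = ∑_y (q_t(y,x) − q_t(x,y)), p_0 = μ, one has −∑_x ψ_0(x) μ(x) ≤ ∑_x f(x) p_T(x) + ∫_0^T ∑_{x,y} ent(q_t(x,y)/(p_t(x)L(x,y)))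 p_t(x)L(x,y) dt, with equality when q_t(x,y) = e^{ψ_t(y)−ψ_t(x)} p_t(x) L(x,y). -/
open Real Finset MeasureTheory

/-!
Along any admissible pair `(p, q)` the pairing `g t = ∑ₓ ψ_t(x) p_t(x)` has derivative
`∑_{x,y} [(ψ_t(y) − ψ_t(x)) q_t(x,y) − (e^{ψ_t(y)−ψ_t(x)} − 1) p_t(x) L(x,y)]`: the continuity
equation turns `∑ₓ ψ ∂ₜp` into the pairing of the flux with the gradient of `ψ`, and the
Hamilton–Jacobi equation rewrites `∑ₓ ∂ₜψ p`. By Fenchel–Young, applied to the ratio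
`q / (pL)` with `ξ = ψ_t(y) − ψ_t(x)`, each summand is at most the running cost, with equality
for `q = e^ξ p L`. Integrating over `[0, T]` and using `g 0 = ∑ ψ₀ μ`, `g T = −∑ f p_T` gives both
claims.
-/

theorem mul_le_ent_add_exp_sub_one (ξ : ℝ) {s : ℝ} (hs : 0 ≤ s) :
    ξ * s ≤ ent s + (exp ξ - 1) := by
  rcases hs.eq_or_lt with rfl | hs
  · simpa [ent] using (exp_pos ξ).le
  · have hlog := log_le_sub_one_of_pos (div_pos (exp_pos ξ) hs)
    rw [log_div (exp_pos ξ).ne' hs.ne', log_exp] at hlog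
    have hscaled := mul_le_mul_of_nonneg_left hlog hs.le
    rw [mul_sub, mul_sub, mul_div_cancel₀ _ hs.ne'] at hscaled
    unfold ent
    linarith

theorem ent_exp (ξ : ℝ) : ent (exp ξ) + (exp ξ - 1) = ξ * exp ξ := by
  simp only [ent, log_exp]
  ring

theorem mul_sub_exp_sub_one_mul_le_ent_div_mul (ξ : ℝ) {Q m : ℝ} (hQ : 0 ≤ Q) (hm : 0 ≤ m)
    (hQm : m = 0 → Q = 0) : ξ * Q - (exp ξ - 1) * m ≤ ent (Q / m) * m := by
  rcases hm.eq_or_lt with rfl | hm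
  · simp [hQm rfl]
  · have h := mul_le_mul_of_nonneg_right
      (mul_le_ent_add_exp_sub_one ξ (div_nonneg hQ hm.le)) hm.le
    rw [mul_assoc, div_mul_cancel₀ _ hm.ne', add_mul] at h
    linarith

theorem ent_exp_mul_div_mul (ξ m : ℝ) :
    ent (exp ξ * m / m) * m = ξ * (exp ξ * m) - (exp ξ - 1) * m := by
  rcases eq_or_ne m 0 with rfl | hm
  · simp
  · rw [mul_div_cancel_right₀ _ hm, ← sub_eq_of_eq_add (ent_exp ξ).symm]
    ring

section Pairing

variable {Γ : Type*} [Fintype Γ]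

theorem sum_mul_sum_sub_eq_sum_sum_sub_mul (ψ : Γ → ℝ) (q : Γ → Γ → ℝ) :
    ∑ x, ψ x * ∑ y, (q y x - q x y) = ∑ x, ∑ y, (ψ y - ψ x) * q x y := by
  simp only [mul_sum, mul_sub, sum_sub_distrib, sub_mul]
  rw [sum_comm (f := fun x y => ψ x * q y x)]

theorem hasDerivAt_sum_mul_of_hamiltonJacobi {L : Γ → Γ → ℝ} {ψ ψ' p : ℝ → Γ → ℝ}
    {q : ℝ → Γ → Γ → ℝ} {t : ℝ}
    (hψ : ∀ x, HasDerivAt (fun s => ψ s x) (ψ' t x) t)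
    (hHJ : ∀ x, ψ' t x + ∑ y, (exp (ψ t y - ψ t x) - 1) * L x y = 0)
    (hp : ∀ x, HasDerivAt (fun s => p s x) (∑ y, (q t y x - q t x y)) t) :
    HasDerivAt (fun s => ∑ x, ψ s x * p s x)
      (∑ x, ∑ y, ((ψ t y - ψ t x) * q t x y
        - (exp (ψ t y - ψ t x) - 1) * (p t x * L x y))) t := by
  refine (HasDerivAt.fun_sum (u := univ) fun x _ => (hψ x).mul (hp x)).congr_deriv ?_
  have hψ' : ∀ x, ψ' t x * p t x = -∑ y, (exp (ψ t y - ψ t x) - 1) * (p t x * L x y) := by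
    intro x
    rw [eq_neg_of_add_eq_zero_left (hHJ x), neg_mul, sum_mul]
    exact congrArg _ (sum_congr rfl fun y _ => by ring)
  rw [sum_add_distrib, sum_mul_sum_sub_eq_sum_sum_sub_mul]
  simp only [hψ', sum_neg_distrib, sum_sub_distrib]
  ring

end Pairing

theorem verification_finite_horizon_general {Γ : Type*} [Fintype Γ]
    (L : Γ → Γ → ℝ) (hL : ∀ x y, 0 ≤ L x y)
    (T : ℝ) (hT : 0 < T)
    (f : Γ → ℝ)
    (ψ ψ' : ℝ → Γ → ℝ)
    (hψderiv : ∀ t ∈ Set.Icc (0 : ℝ) T, ∀ x,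
      HasDerivAt (fun s => ψ s x) (ψ' t x) t)
    (hHJE : ∀ t ∈ Set.Icc (0 : ℝ) T, ∀ x,
      ψ' t x + ∑ y, (Real.exp (ψ t y - ψ t x) - 1) * L x y = 0)
    (hψT : ∀ x, ψ T x = -f x)
    (μ : Γ → ℝ) (p : ℝ → Γ → ℝ) (q : ℝ → Γ → Γ → ℝ)
    (hp0 : ∀ t ∈ Set.Icc (0 : ℝ) T, ∀ x, 0 ≤ p t x)
    (hq0 : ∀ t ∈ Set.Icc (0 : ℝ) T, ∀ x y, 0 ≤ q t x y)
    (hCE : ∀ t ∈ Set.Icc (0 : ℝ) T, ∀ x,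
      HasDerivAt (fun s => p s x) (∑ y, (q t y x - q t x y)) t)
    (hinit : ∀ x, p 0 x = μ x)
    (hAC : ∀ t ∈ Set.Icc (0 : ℝ) T, ∀ x y, p t x * L x y = 0 → q t x y = 0)
    (hInt : IntervalIntegrable
      (fun t => ∑ x, ∑ y, ent (q t x y / (p t x * L x y)) * (p t x * L x y))
      volume 0 T) :
    (-(∑ x, ψ 0 x * μ x) ≤ ∑ x, f x * p T x +
      ∫ t in (0 : ℝ)..T,
        ∑ x, ∑ y, ent (q t x y / (p t x * L x y)) * (p t x * L x y)) ∧
    ((∀ t ∈ Set.Icc (0 : ℝ) T, ∀ x y,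
        q t x y = Real.exp (ψ t y - ψ t x) * p t x * L x y) →
      -(∑ x, ψ 0 x * μ x) = ∑ x, f x * p T x +
        ∫ t in (0 : ℝ)..T,
          ∑ x, ∑ y, ent (q t x y / (p t x * L x y)) * (p t x * L x y)) := by
  set g : ℝ → ℝ := fun t => ∑ x, ψ t x * p t x
  have hg : ∀ t ∈ Set.Icc 0 T, HasDerivAt g _ t := fun t ht =>
    hasDerivAt_sum_mul_of_hamiltonJacobi (hψderiv t ht) (hHJE t ht) (hCE t ht)
  have hg0 : g 0 = ∑ x, ψ 0 x * μ x := by simp only [g, hinit]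
  have hgT : g T = -∑ x, f x * p T x := by simp only [g, hψT, neg_mul, sum_neg_distrib]
  constructor
  · have hbound := intervalIntegral.sub_le_integral_of_hasDeriv_right_of_le hT.le
      (fun t ht => (hg t ht).continuousAt.continuousWithinAt)
      (fun t ht => (hg t (Set.Ioo_subset_Icc_self ht)).hasDerivWithinAt)
      ((intervalIntegrable_iff_integrableOn_Icc_of_le hT.le).mp hInt)
      (fun t ht => sum_le_sum fun x _ => sum_le_sum fun y _ =>
        have ht := Set.Ioo_subset_Icc_self ht
        mul_sub_exp_sub_one_mul_le_ent_div_mul _ (hq0 t ht x y)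
          (mul_nonneg (hp0 t ht x) (hL x y)) (hAC t ht x y))
    linarith
  · intro hopt
    have hexact := intervalIntegral.integral_eq_sub_of_hasDerivAt (fun t ht => by
      rw [Set.uIcc_of_le hT.le] at ht
      refine (hg t ht).congr_deriv ?_
      refine sum_congr rfl fun x _ => sum_congr rfl fun y _ => ?_
      rw [hopt t ht x y, mul_assoc, ent_exp_mul_div_mul]) hInt
    linarith

/-- Verification argument for the finite-horizon optimal control problem: if
`ψ` is a `C¹`-in-time solution of the Hamilton–Jacobi equation
`∂_t ψ_t(x) + ∑_y (e^{ψ_t(y)−ψ_t(x)} − 1) L(x,y) = 0` with `ψ_T = −f`,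
`f ≥ 0`, then for every admissible density-flux pair `(p,q)` solving the
continuity equation with `p_0 = μ` (and `q ≪ p⊗L`),
`−∑_x ψ_0(x) μ(x) ≤ ∑_x f(x) p_T(x) + ∫_0^T ∑_{x,y} ent(q/(pL)) pL dt`,
with equality when `q_t(x,y) = e^{ψ_t(y)−ψ_t(x)} p_t(x) L(x,y)`. -/
theorem verification_finite_horizon {Γ : Type*} [Fintype Γ]
    (L : Γ → Γ → ℝ) (hL : ∀ x y, 0 ≤ L x y) (hdiag : ∀ x, L x x = 0)
    (T : ℝ) (hT : 0 < T)
    (f : Γ → ℝ) (hf : ∀ x, 0 ≤ f x)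
    (ψ ψ' : ℝ → Γ → ℝ)
    (hψderiv : ∀ t ∈ Set.Icc (0 : ℝ) T, ∀ x,
      HasDerivAt (fun s => ψ s x) (ψ' t x) t)
    (hHJE : ∀ t ∈ Set.Icc (0 : ℝ) T, ∀ x,
      ψ' t x + ∑ y, (Real.exp (ψ t y - ψ t x) - 1) * L x y = 0)
    (hψT : ∀ x, ψ T x = -f x)
    (μ : Γ → ℝ) (p : ℝ → Γ → ℝ) (q : ℝ → Γ → Γ → ℝ)
    (hp0 : ∀ t ∈ Set.Icc (0 : ℝ) T, ∀ x, 0 ≤ p t x)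
    (hp1 : ∀ t ∈ Set.Icc (0 : ℝ) T, ∑ x, p t x = 1)
    (hq0 : ∀ t ∈ Set.Icc (0 : ℝ) T, ∀ x y, 0 ≤ q t x y)
    (hCE : ∀ t ∈ Set.Icc (0 : ℝ) T, ∀ x,
      HasDerivAt (fun s => p s x) (∑ y, (q t y x - q t x y)) t)
    (hinit : ∀ x, p 0 x = μ x)
    (hAC : ∀ t ∈ Set.Icc (0 : ℝ) T, ∀ x y, p t x * L x y = 0 → q t x y = 0)
    (hInt : IntervalIntegrable
      (fun t => ∑ x, ∑ y, ent (q t x y / (p t x * L x y)) * (p t x * L x y))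
      volume 0 T) :
    (-(∑ x, ψ 0 x * μ x) ≤ ∑ x, f x * p T x +
      ∫ t in (0 : ℝ)..T,
        ∑ x, ∑ y, ent (q t x y / (p t x * L x y)) * (p t x * L x y)) ∧
    ((∀ t ∈ Set.Icc (0 : ℝ) T, ∀ x y,
        q t x y = Real.exp (ψ t y - ψ t x) * p t x * L x y) →
      -(∑ x, ψ 0 x * μ x) = ∑ x, f x * p T x +
        ∫ t in (0 : ℝ)..T,
          ∑ x, ∑ y, ent (q t x y / (p t x * L x y)) * (p t x * L x y)) :=
  verification_finite_horizon_general L hL T hT f ψ ψ' hψderiv hHJE hψT μ p q hp0 hq0 hCE hinit hAC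
    hInt
end
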